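/- arXiv:1102.1641 — 4 statements merged into one kernel-verified Lean document; each statement's English description precedes it below -/
import Mathlib

section
/- (Duality, case n = 1.) Let A, B, C be m×m complex matrices with B, C invertible, and let T(E) = [[B⁻¹(E·I − A), −B⁻¹C], [I, 0]]. Then for all z ≠ 0 and all E, det(T(E) − z·I) = (−z)^m · det(E·I − H(z)) / det B, where H(z) = A + B + z·B + C/z − B (i.e., H(z) = A + z B + C/z). -/
/-!
Take the Schur complement of `T(E) − z·I` with respect to its lower-right block `−z·I`: it is
`B⁻¹(E·I − A) − z·I − z⁻¹B⁻¹C = B⁻¹(E·I − H(z))`, so the determinant factors as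
`(−z)^m · det(E·I − H(z)) / det B`.
-/

open Matrix

theorem Matrix.fromBlocks_sub_smul_one {l n R : Type*} [DecidableEq l] [DecidableEq n] [Ring R]
    (P : Matrix l l R) (Q : Matrix l n R) (S : Matrix n l R) (T : Matrix n n R)
    (c : R) :
    fromBlocks P Q S T - c • (1 : Matrix (l ⊕ n) (l ⊕ n) R) =
      fromBlocks (P - c • 1) Q S (T - c • 1) := by
  rw [← fromBlocks_one, fromBlocks_smul, sub_eq_add_neg, fromBlocks_neg, fromBlocks_add]
  simp only [smul_zero, neg_zero, add_zero, ← sub_eq_add_neg]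

theorem Matrix.det_fromBlocks_smul_one₂₂ {l n K : Type*} [Fintype l] [Fintype n] [DecidableEq l]
    [DecidableEq n] [Field K] (P : Matrix l l K) (Q : Matrix l n K) (S : Matrix n l K)
    {c : K} (hc : c ≠ 0) :
    (fromBlocks P Q S (c • 1)).det = c ^ Fintype.card n * (P - c⁻¹ • (Q * S)).det := by
  let _ : Invertible (c • (1 : Matrix n n K)) :=
    ⟨c⁻¹ • 1, by simp [smul_smul, hc], by simp [smul_smul, hc]⟩
  rw [det_fromBlocks₂₂, show ⅟(c • (1 : Matrix n n K)) = c⁻¹ • 1 from rfl, det_smul, det_one,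
    mul_one, Matrix.mul_smul, Matrix.mul_one, Matrix.smul_mul]

theorem stmt_9_general {m : ℕ} (A B C : Matrix (Fin m) (Fin m) ℂ)
    (hB : IsUnit B.det) (E : ℂ) (z : ℂ) (hz : z ≠ 0) :
    (fromBlocks (B⁻¹ * (E • 1 - A)) (-(B⁻¹ * C)) 1 0
        - z • (1 : Matrix (Fin m ⊕ Fin m) (Fin m ⊕ Fin m) ℂ)).det =
      (-z) ^ m * (E • (1 : Matrix (Fin m) (Fin m) ℂ) - (A + z • B + z⁻¹ • C)).det
        / B.det := by
  have hschur : B⁻¹ * (E • 1 - A) - z • 1 - (-z)⁻¹ • (-(B⁻¹ * C) * 1) =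
      B⁻¹ * (E • 1 - (A + z • B + z⁻¹ • C)) := by
    simp only [Matrix.mul_one, inv_neg, neg_smul, smul_neg, neg_neg, Matrix.mul_sub,
      Matrix.mul_add, Matrix.mul_smul, nonsing_inv_mul B hB]
    abel
  rw [fromBlocks_sub_smul_one, zero_sub, ← neg_smul,
    det_fromBlocks_smul_one₂₂ _ _ _ (neg_ne_zero.mpr hz), hschur, det_mul, det_nonsing_inv,
    Ring.inverse_eq_inv, Fintype.card_fin]
  ring

/-- Duality for `n = 1`: with `T(E) = [[B⁻¹(E·I − A), −B⁻¹C], [I, 0]]` and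
`H(z) = A + z B + C/z`, for `z ≠ 0` one has
`det(T(E) − z·I) = (−z)^m det(E·I − H(z)) / det B`. -/
theorem stmt_9 {m : ℕ} (A B C : Matrix (Fin m) (Fin m) ℂ)
    (hB : IsUnit B.det) (hC : IsUnit C.det) (E : ℂ) (z : ℂ) (hz : z ≠ 0) :
    (fromBlocks (B⁻¹ * (E • 1 - A)) (-(B⁻¹ * C)) 1 0
        - z • (1 : Matrix (Fin m ⊕ Fin m) (Fin m ⊕ Fin m) ℂ)).det =
      (-z) ^ m * (E • (1 : Matrix (Fin m) (Fin m) ℂ) - (A + z • B + z⁻¹ • C)).det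
        / B.det :=
  stmt_9_general A B C hB E z hz
end

section
/- (Duality.) Let T(E) = t_n⋯t_1 with t_k = [[B_k⁻¹(E·I − A_k), −B_k⁻¹C_k], [I, 0]], all B_k, C_k invertible, n ≥ 2. Then for every z ≠ 0, det(T(E) − z·I_{2m}) = (−z)^m · det(E·I_{mn} − H(z)) / (det B_1 ⋯ det B_n), where H(z) is the mn×mn block tridiagonal matrix with diagonal blocks A_k, superdiagonal blocks B_k, subdiagonal blocks C_k, and corners (H(z))_{1n} = C_1/z, (H(z))_{n1} = z·B_n. -/
open Matrix

/-- The `(a,b)` block of size `m` of an `mn × mn` matrix. -/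
def blockOf {n m : ℕ} (M : Matrix (Fin n × Fin m) (Fin n × Fin m) ℂ) (a b : Fin n) :
    Matrix (Fin m) (Fin m) ℂ := fun i j => M (a, i) (b, j)

/-- The block tridiagonal matrix `H(z)`: diagonal blocks `A_k`, superdiagonal blocks `B_k`,
subdiagonal blocks `C_k`, and corner blocks `C_1/z` at position `(1,n)` and `z B_n`
at position `(n,1)`. -/
noncomputable def Hmat {n m : ℕ} (A B C : Fin n → Matrix (Fin m) (Fin m) ℂ) (z : ℂ) :
    Matrix (Fin n × Fin m) (Fin n × Fin m) ℂ := fun p q =>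
  ((if p.1 = q.1 then A p.1 else 0)
    + (if (q.1 : ℕ) = (p.1 : ℕ) + 1 then B p.1 else 0)
    + (if (p.1 : ℕ) = (q.1 : ℕ) + 1 then C p.1 else 0)
    + (if (p.1 : ℕ) = 0 ∧ (q.1 : ℕ) = n - 1 then z⁻¹ • C p.1 else 0)
    + (if (p.1 : ℕ) = n - 1 ∧ (q.1 : ℕ) = 0 then z • B p.1 else 0)) p.2 q.2

/-- The balanced block tridiagonal matrix `H^B(z)`: diagonal blocks `A_k`, superdiagonal
blocks `z B_k`, subdiagonal blocks `C_k/z`, and corner blocks `C_1/z` at `(1,n)` and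
`z B_n` at `(n,1)`. -/
noncomputable def HBmat {n m : ℕ} (A B C : Fin n → Matrix (Fin m) (Fin m) ℂ) (z : ℂ) :
    Matrix (Fin n × Fin m) (Fin n × Fin m) ℂ := fun p q =>
  ((if p.1 = q.1 then A p.1 else 0)
    + (if (q.1 : ℕ) = (p.1 : ℕ) + 1 then z • B p.1 else 0)
    + (if (p.1 : ℕ) = (q.1 : ℕ) + 1 then z⁻¹ • C p.1 else 0)
    + (if (p.1 : ℕ) = 0 ∧ (q.1 : ℕ) = n - 1 then z⁻¹ • C p.1 else 0)
    + (if (p.1 : ℕ) = n - 1 ∧ (q.1 : ℕ) = 0 then z • B p.1 else 0)) p.2 q.2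

/-- The block diagonal matrix `S(z)` with `k`-th diagonal block `z^k I_m`, `k = 1,…,n`. -/
noncomputable def Smat (n m : ℕ) (z : ℂ) :
    Matrix (Fin n × Fin m) (Fin n × Fin m) ℂ :=
  Matrix.diagonal fun p => z ^ ((p.1 : ℕ) + 1)

/-- The one-step transfer matrix `t_k = [[B_k⁻¹(E·I - A_k), -B_k⁻¹C_k], [I, 0]]`. -/
noncomputable def oneStep {m : ℕ} (A B C : Matrix (Fin m) (Fin m) ℂ) (E : ℂ) :
    Matrix (Fin m ⊕ Fin m) (Fin m ⊕ Fin m) ℂ :=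
  fromBlocks (B⁻¹ * (E • 1 - A)) (-(B⁻¹ * C)) 1 0

/-- The `n`-step transfer matrix `T(E) = t_n ⋯ t_1`. -/
noncomputable def transferMat {m n : ℕ} (A B C : Fin n → Matrix (Fin m) (Fin m) ℂ)
    (E : ℂ) : Matrix (Fin m ⊕ Fin m) (Fin m ⊕ Fin m) ℂ :=
  ((List.ofFn fun k : Fin n => oneStep (A k) (B k) (C k) E).reverse).prod

/-!
Put `ζ_k = z⁻¹` on the last site and `ζ_k = 1` elsewhere. Then `z⁻¹ T(E)` is the ordered
product of the twisted steps `X_k = ζ_k t_k`, and `det (1 - X_{n-1} ⋯ X_0)` is the determinant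
of the cyclic block matrix `1 - S`, where `S` moves block column `k` to block row `k + 1` with
weight `X_k`. Multiplying block row `a` by `diag(ζ_{a-1}⁻¹ B_{a-1}, 1)` clears the inverses
`B_k⁻¹` at the price of `z^m ∏ det B_k`. In the resulting system the second components are the
first ones shifted by one site; eliminating them is a Schur complement against an identity block,
and it leaves an `mn × mn` block matrix whose block rows, rotated by one, are those of `H(z) - E`.
-/

section BlockMatrix

variable {R : Type*} [CommRing R] {ι α : Type*} [Fintype ι] [Fintype α]

theorem comp_mul (M N : Matrix α α (Matrix ι ι R)) :
    comp α α ι ι R (M * N) = comp α α ι ι R M * comp α α ι ι R N :=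
  (compRingEquiv α ι R).map_mul M N

variable [DecidableEq ι] [DecidableEq α]

theorem det_comp_of_blockTriangular {β : Type*} [Fintype β] [LinearOrder β]
    {M : Matrix α α (Matrix ι ι R)} (b : α ≃ β) (h : M.BlockTriangular b) :
    (comp α α ι ι R M).det = ∏ a, (M a a).det := by
  rw [h.comp.det_fintype, ← b.prod_comp]
  refine Finset.prod_congr rfl fun a _ => ?_
  let e : {p : α × ι // b p.1 = b a} ≃ ι :=
    { toFun := fun p => p.1.2
      invFun := fun i => ⟨(a, i), rfl⟩
      left_inv := by rintro ⟨⟨a', i⟩, h'⟩; cases b.injective h'; rfl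
      right_inv := fun _ => rfl }
  rw [← det_submatrix_equiv_self e.symm]
  rfl

theorem det_comp_fromBlocks {κ : Type*} [Fintype κ] [DecidableEq κ]
    (P : Matrix α α (Matrix ι ι R)) (Q : Matrix α α (Matrix ι κ R))
    (S : Matrix α α (Matrix κ ι R)) (T : Matrix α α (Matrix κ κ R)) :
    (comp α α (ι ⊕ κ) (ι ⊕ κ) R
        (of fun a c => fromBlocks (P a c) (Q a c) (S a c) (T a c))).det
      = (fromBlocks (comp α α ι ι R P) (comp α α ι κ R Q) (comp α α κ ι R S)
          (comp α α κ κ R T)).det := by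
  rw [← det_submatrix_equiv_self (Equiv.prodSumDistrib α ι κ).symm]
  congr 1
  ext (⟨a, i⟩ | ⟨a, i⟩) (⟨c, j⟩ | ⟨c, j⟩) <;> rfl

theorem det_comp_eq_submatrix_finRotate {n : ℕ}
    (M : Matrix (Fin (n + 1)) (Fin (n + 1)) (Matrix ι ι R)) :
    (comp _ _ ι ι R M).det
      = (-1) ^ (n * Fintype.card ι)
        * (comp _ _ ι ι R (M.submatrix (finRotate (n + 1)) id)).det := by
  have : comp _ _ ι ι R (M.submatrix (finRotate (n + 1)) id)
      = (comp _ _ ι ι R M).submatrix (Equiv.prodCongrLeft fun _ => finRotate (n + 1)) id := rfl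
  rw [this, det_permute, Equiv.Perm.sign_prodCongrLeft]
  simp [sign_finRotate, pow_mul, ← mul_assoc, ← mul_pow]

end BlockMatrix

section DescProd

variable {M : Type*} [Monoid M]

def descProd (X : ℕ → M) (c : ℕ) : ℕ → M
  | 0 => 1
  | k + 1 => X (c + k) * descProd X c k

@[simp] theorem descProd_zero (X : ℕ → M) (c : ℕ) : descProd X c 0 = 1 := rfl

theorem descProd_succ (X : ℕ → M) (c k : ℕ) :
    descProd X c (k + 1) = X (c + k) * descProd X c k :=
  rfl

theorem mul_descProd (X : ℕ → M) {c k j : ℕ} (h : c + k = j) :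
    X j * descProd X c k = descProd X c (k + 1) := by
  subst h; rfl

theorem descProd_zero_eq_prod_reverse_ofFn (X : ℕ → M) (n : ℕ) :
    descProd X 0 n = (List.ofFn fun i : Fin n => X i).reverse.prod := by
  induction n with
  | zero => rfl
  | succ n ih =>
    rw [descProd_succ, ih, List.ofFn_succ', List.concat_eq_append, List.reverse_append]
    simp

end DescProd

section Cyclic

open Fin.NatCast

variable {R : Type*} [CommRing R] {ι : Type*} [Fintype ι] [DecidableEq ι] {n : ℕ}

def cyclicShift {β : Type*} [Zero β] (X : Fin (n + 1) → β) :
    Matrix (Fin (n + 1)) (Fin (n + 1)) β :=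
  of fun a c => if a = c + 1 then X c else 0

theorem cyclicShift_mul_apply {β : Type*} [NonUnitalNonAssocSemiring β] (X : Fin (n + 1) → β)
    (M : Matrix (Fin (n + 1)) (Fin (n + 1)) β) (a c : Fin (n + 1)) :
    (cyclicShift X * M) a c = X (a - 1) * M (a - 1) c := by
  rw [mul_apply, Finset.sum_eq_single (a - 1)]
  · simp [cyclicShift]
  · intro b _ hb
    simp [cyclicShift, eq_sub_iff_add_eq.not.mp hb, Ne.symm]
  · simp

theorem diagonal_mul_cyclicShift {β : Type*} [NonUnitalNonAssocSemiring β]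
    (d X : Fin (n + 1) → β) :
    diagonal d * cyclicShift X = cyclicShift fun c => d (c + 1) * X c := by
  ext a c
  simp only [diagonal_mul, cyclicShift, of_apply, mul_ite, mul_zero]
  split_ifs with h
  · rw [h]
  · rfl

theorem det_comp_one_sub_cyclicShift (X : Fin (n + 1) → Matrix ι ι R) :
    (comp _ _ ι ι R (1 - cyclicShift X)).det = (1 - (List.ofFn X).reverse.prod).det := by
  set Y : ℕ → Matrix ι ι R := fun j => X (j : Fin (n + 1))
  have hXY : ∀ b, X b = Y b := fun b => by simp [Y]
  set L : Matrix (Fin (n + 1)) (Fin (n + 1)) (Matrix ι ι R) :=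
    of fun a c => if (c : ℕ) ≤ a then descProd Y c (a - c) else 0
  set U : Matrix (Fin (n + 1)) (Fin (n + 1)) (Matrix ι ι R) :=
    of fun a c => (if a = c then 1 else 0) - if a = 0 then descProd Y c (n + 1 - c) else 0
  have hGL : (1 - cyclicShift X) * L = U := by
    ext1 a c
    have hc : (c : ℕ) ≤ n := Nat.lt_succ_iff.mp c.isLt
    rw [sub_mul, one_mul, Matrix.sub_apply, cyclicShift_mul_apply, hXY]
    simp only [L, U, of_apply]
    by_cases ha : a = 0
    · subst ha
      have h0 : ((0 - 1 : Fin (n + 1)) : ℕ) = n := by simp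
      simp only [h0, Fin.val_zero, if_pos hc, if_true, Nat.le_zero]
      rw [mul_descProd Y (Nat.add_sub_cancel' hc), Nat.sub_add_comm hc]
      congr 1
      by_cases hc0 : c = 0
      · subst hc0
        simp
      · rw [if_neg (Fin.val_ne_zero_iff.mpr hc0), if_neg (Ne.symm hc0)]
    · have h1 : ((a - 1 : Fin (n + 1)) : ℕ) = a - 1 := by rw [Fin.coe_sub_one, if_neg ha]
      have ha' : (a : ℕ) ≠ 0 := Fin.val_ne_zero_iff.mpr ha
      simp only [h1, if_neg ha, sub_zero]
      rcases lt_trichotomy (c : ℕ) a with hca | hca | hca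
      · rw [if_pos (by omega), if_pos (by omega),
          mul_descProd Y (by omega : (c : ℕ) + (a - 1 - c) = a - 1),
          show (a : ℕ) - c = a - 1 - c + 1 by omega, sub_self,
          if_neg (fun h => hca.ne (congrArg Fin.val h).symm)]
      · obtain rfl := Fin.ext hca
        rw [if_pos le_rfl, if_neg (by omega), if_pos rfl, Nat.sub_self]
        simp
      · rw [if_neg (by omega), if_neg (by omega), if_neg (fun h => hca.ne (congrArg Fin.val h))]
        simp
  have hL : (comp _ _ ι ι R L).det = 1 := by
    refine (det_comp_of_blockTriangular OrderDual.toDual fun a c hca => ?_).trans ?_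
    · have hac : (a : ℕ) < c := OrderDual.toDual_lt_toDual.mp hca
      exact if_neg (by omega)
    · simp [L]
  have hU : (comp _ _ ι ι R U).det = (1 - descProd Y 0 (n + 1)).det := by
    refine (det_comp_of_blockTriangular (Equiv.refl _) fun a c hca => ?_).trans ?_
    · have ha : a ≠ 0 := by rintro rfl; exact Fin.not_lt_zero c hca
      have hac : a ≠ c := (ne_of_lt hca).symm
      simp [U, hac, ha]
    · rw [Finset.prod_eq_single 0 (fun a _ ha => by simp [U, ha]) (by simp)]
      simp [U]
  rw [← mul_one (det _), ← hL, ← det_mul, ← comp_mul, hGL, hU,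
    descProd_zero_eq_prod_reverse_ofFn]
  simp [Y]

end Cyclic

theorem Fin.ite_add_one_eq {M : Type*} [AddMonoid M] {N : ℕ} (k c : Fin (N + 1)) (x y : M) :
    (if k + 1 = c then (if k = Fin.last N then y else x) else 0)
      = (if (c : ℕ) = k + 1 then x else 0)
        + (if (k : ℕ) = N ∧ (c : ℕ) = 0 then y else 0) := by
  have hc := c.isLt
  by_cases hk : k = Fin.last N
  · subst hk
    rw [if_pos rfl, Fin.last_add_one, Fin.val_last, if_neg (show (c : ℕ) ≠ N + 1 by omega),
      zero_add]
    exact if_congr ⟨fun h => ⟨rfl, by rw [← h]; rfl⟩, fun h => (Fin.ext h.2).symm⟩ rfl rfl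
  · have hk' : (k : ℕ) < N := Fin.val_lt_last hk
    rw [if_neg hk, if_neg (show ¬((k : ℕ) = N ∧ (c : ℕ) = 0) by omega), add_zero]
    exact if_congr (by rw [Fin.ext_iff, Fin.val_add_one_of_lt' (by omega), eq_comm]) rfl rfl

section Transfer

variable {K : Type*} [Field K] {ι : Type*} [Fintype ι] [DecidableEq ι]

theorem det_sub_smul_one (M : Matrix ι ι K) {z : K} (hz : z ≠ 0) :
    (M - z • 1).det = (-z) ^ Fintype.card ι * (1 - z⁻¹ • M).det := by
  rw [← det_smul]
  congr 1
  rw [smul_sub, smul_smul, neg_mul, mul_inv_cancel₀ hz]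
  module

theorem prod_reverse_ofFn_smul_last {N : ℕ} (t : Fin (N + 1) → Matrix ι ι K) (s : K) :
    (List.ofFn fun k => (if k = Fin.last N then s else 1) • t k).reverse.prod
      = s • (List.ofFn t).reverse.prod := by
  rw [List.ofFn_succ', List.ofFn_succ']
  simp [Fin.castSucc_ne_last]

end Transfer

theorem fromBlocks_mul_smul_oneStep {m : ℕ} {A B C : Matrix (Fin m) (Fin m) ℂ}
    (hB : IsUnit B.det) (E : ℂ) {s : ℂ} (hs : s ≠ 0) :
    fromBlocks (s⁻¹ • B) 0 0 1 * (s • oneStep A B C E)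
      = fromBlocks (E • 1 - A) (-C) (s • 1) 0 := by
  rw [oneStep, Matrix.mul_smul, fromBlocks_multiply, fromBlocks_smul]
  simp [smul_smul, mul_inv_cancel₀ hs, ← Matrix.mul_assoc, mul_nonsing_inv _ hB]

section Duality

variable {m N : ℕ} (A B C : Fin (N + 1) → Matrix (Fin m) (Fin m) ℂ) (E z : ℂ)

noncomputable def boundaryTwist (k : Fin (N + 1)) : ℂ := if k = Fin.last N then z⁻¹ else 1

theorem boundaryTwist_ne_zero {z : ℂ} (hz : z ≠ 0) (k : Fin (N + 1)) :
    boundaryTwist z k ≠ 0 := by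
  unfold boundaryTwist; split_ifs <;> simp [hz]

theorem prod_boundaryTwist_inv : ∏ k : Fin (N + 1), (boundaryTwist z k)⁻¹ = z := by
  simp [boundaryTwist, apply_ite (·⁻¹)]

noncomputable def twistedB (a : Fin (N + 1)) : Matrix (Fin m) (Fin m) ℂ :=
  (boundaryTwist z (a - 1))⁻¹ • B (a - 1)

noncomputable def schurBlock : Matrix (Fin (N + 1)) (Fin (N + 1)) (Matrix (Fin m) (Fin m) ℂ) :=
  diagonal (twistedB B z) - cyclicShift (fun c => E • 1 - A c)
    + cyclicShift C * cyclicShift (fun c => boundaryTwist z c • 1)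

theorem det_comp_diagonal_twistedB :
    (comp _ _ _ _ ℂ
        (diagonal fun a => fromBlocks (twistedB B z a) 0 0 (1 : Matrix (Fin m) (Fin m) ℂ))).det
      = z ^ m * ∏ k, (B k).det := by
  rw [det_comp_of_blockTriangular (Equiv.refl _) (blockTriangular_diagonal _)]
  simp only [diagonal_apply_eq, det_fromBlocks_zero₂₁, det_one, mul_one, twistedB, det_smul,
    Fintype.card_fin]
  have hshift := (Equiv.subRight (1 : Fin (N + 1))).prod_comp
    fun k => (boundaryTwist z k)⁻¹ ^ m * (B k).det
  simp only [Equiv.subRight_apply] at hshift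
  rw [hshift, Finset.prod_mul_distrib, Finset.prod_pow, prod_boundaryTwist_inv]

theorem det_comp_diagonal_twistedB_mul (hB : ∀ k, IsUnit (B k).det) (hz : z ≠ 0) :
    (comp _ _ _ _ ℂ (diagonal (fun a => fromBlocks (twistedB B z a) 0 0 1) *
      (1 - cyclicShift fun k => boundaryTwist z k • oneStep (A k) (B k) (C k) E))).det
      = (comp _ _ _ _ ℂ (schurBlock A B C E z)).det := by
  let P : Matrix (Fin (N + 1)) (Fin (N + 1)) (Matrix (Fin m) (Fin m) ℂ) :=
    diagonal (twistedB B z) - cyclicShift (fun c => E • 1 - A c)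
  let S : Matrix (Fin (N + 1)) (Fin (N + 1)) (Matrix (Fin m) (Fin m) ℂ) :=
    -cyclicShift (fun c => boundaryTwist z c • 1)
  have hblocks : diagonal (fun a => fromBlocks (twistedB B z a) 0 0 1) *
      (1 - cyclicShift fun k => boundaryTwist z k • oneStep (A k) (B k) (C k) E)
      = of fun a c => fromBlocks (P a c) (cyclicShift C a c) (S a c) ((1 : Matrix _ _ _) a c) := by
    rw [mul_sub, mul_one, diagonal_mul_cyclicShift]
    simp only [twistedB, add_sub_cancel_right,
      fromBlocks_mul_smul_oneStep (hB _) E (boundaryTwist_ne_zero hz _)]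
    ext a c : 1
    simp only [P, S, diagonal, cyclicShift, of_apply, Matrix.sub_apply, Matrix.neg_apply,
      one_apply]
    split_ifs <;> ext (i | i) (j | j) <;> simp [twistedB]
  rw [hblocks, det_comp_fromBlocks P _ S 1, comp_one, det_fromBlocks_one₂₂, ← comp_mul]
  congr 1
  ext ⟨a, i⟩ ⟨c, j⟩
  simp [schurBlock, P, S]

theorem comp_schurBlock_submatrix_finRotate :
    comp _ _ _ _ ℂ ((schurBlock A B C E z).submatrix (finRotate (N + 1)) id)
      = Hmat A B C z - E • (1 : Matrix (Fin (N + 1) × Fin m) (Fin (N + 1) × Fin m) ℂ) := by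
  ext ⟨k, i⟩ ⟨c, j⟩
  have hE : (E • (1 : Matrix (Fin (N + 1) × Fin m) (Fin (N + 1) × Fin m) ℂ)) (k, i) (c, j)
      = (if k = c then E • (1 : Matrix (Fin m) (Fin m) ℂ) else 0) i j := by
    by_cases hkc : k = c
    · subst hkc; simp [one_apply]
    · simp [hkc, one_apply]
  rw [Matrix.sub_apply, hE]
  simp only [comp_apply, submatrix_apply, id, Hmat]
  rw [← Matrix.sub_apply]
  refine congrFun (congrFun ?_ i) j
  have hB : (if k + 1 = c then (boundaryTwist z k)⁻¹ • B k else 0)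
      = (if (c : ℕ) = k + 1 then B k else 0)
        + if (k : ℕ) = N ∧ (c : ℕ) = 0 then z • B k else 0 := by
    rw [← Fin.ite_add_one_eq]
    unfold boundaryTwist
    split_ifs <;> simp_all
  have hC : C k * (if k = c + 1 then boundaryTwist z c • 1 else 0)
      = (if (k : ℕ) = c + 1 then C k else 0)
        + if (k : ℕ) = 0 ∧ (c : ℕ) = N then z⁻¹ • C k else 0 := by
    simp only [and_comm (a := (k : ℕ) = 0)]
    rw [← Fin.ite_add_one_eq]
    unfold boundaryTwist
    by_cases hkc : k = c + 1
    · rw [if_pos hkc, if_pos hkc.symm]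
      split_ifs <;> simp
    · rw [if_neg hkc, if_neg (Ne.symm hkc), mul_zero]
  have hA : (if k + 1 = c + 1 then E • 1 - A c else 0)
      = (if k = c then E • 1 else 0) - if k = c then A k else 0 := by
    simp only [add_left_inj]
    split_ifs with hkc
    · rw [hkc]
    · simp
  simp only [schurBlock, Matrix.add_apply, Matrix.sub_apply, cyclicShift_mul_apply,
    finRotate_apply, add_sub_cancel_right]
  simp only [diagonal_apply, twistedB, add_sub_cancel_right, cyclicShift, of_apply]
  rw [hB, hC, hA, Nat.add_sub_cancel]
  abel

theorem det_comp_schurBlock :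
    (comp _ _ _ _ ℂ (schurBlock A B C E z)).det = (-1) ^ m * (E • 1 - Hmat A B C z).det := by
  rw [det_comp_eq_submatrix_finRotate, comp_schurBlock_submatrix_finRotate, ← neg_sub, det_neg,
    Fintype.card_prod, Fintype.card_fin, Fintype.card_fin, ← mul_assoc, ← pow_add,
    show N * m + (N + 1) * m = 2 * (N * m) + m by ring, pow_add, pow_mul, neg_one_sq, one_pow,
    one_mul]

end Duality

theorem stmt_10_general {m n : ℕ} (hn : 2 ≤ n) (A B C : Fin n → Matrix (Fin m) (Fin m) ℂ)
    (hB : ∀ k, IsUnit (B k).det)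
    (E : ℂ) (z : ℂ) (hz : z ≠ 0) :
    (transferMat A B C E
        - z • (1 : Matrix (Fin m ⊕ Fin m) (Fin m ⊕ Fin m) ℂ)).det =
      (-z) ^ m *
        (E • (1 : Matrix (Fin n × Fin m) (Fin n × Fin m) ℂ) - Hmat A B C z).det /
        ∏ k : Fin n, (B k).det := by
  obtain ⟨N, rfl⟩ : ∃ N, n = N + 1 := ⟨n - 1, by omega⟩
  set X := fun k => boundaryTwist z k • oneStep (A k) (B k) (C k) E
  have hT : (List.ofFn X).reverse.prod = z⁻¹ • transferMat A B C E :=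
    prod_reverse_ofFn_smul_last _ _
  have hcyclic : (transferMat A B C E - z • 1).det
      = z ^ (m + m) * (comp _ _ _ _ ℂ (1 - cyclicShift X)).det := by
    rw [det_sub_smul_one _ hz, det_comp_one_sub_cyclicShift, hT, Fintype.card_sum,
      Fintype.card_fin, Even.neg_pow ⟨m, rfl⟩]
  have hprod : z ^ m * (∏ k, (B k).det) * (comp _ _ _ _ ℂ (1 - cyclicShift X)).det
      = (-1) ^ m * (E • 1 - Hmat A B C z).det := by
    rw [← det_comp_diagonal_twistedB, ← det_mul, ← comp_mul,
      det_comp_diagonal_twistedB_mul A B C E z hB hz, det_comp_schurBlock]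
  rw [hcyclic, eq_div_iff (Finset.prod_ne_zero_iff.mpr fun k _ => (hB k).ne_zero), neg_pow]
  linear_combination z ^ m * hprod

/-- Duality: for `z ≠ 0`,
`det(T(E) − z·I_{2m}) = (−z)^m det(E·I_{mn} − H(z)) / (det B_1 ⋯ det B_n)`. -/
theorem stmt_10 {m n : ℕ} (hn : 2 ≤ n) (A B C : Fin n → Matrix (Fin m) (Fin m) ℂ)
    (hB : ∀ k, IsUnit (B k).det) (hC : ∀ k, IsUnit (C k).det)
    (E : ℂ) (z : ℂ) (hz : z ≠ 0) :
    (transferMat A B C E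
        - z • (1 : Matrix (Fin m ⊕ Fin m) (Fin m ⊕ Fin m) ℂ)).det =
      (-z) ^ m *
        (E • (1 : Matrix (Fin n × Fin m) (Fin n × Fin m) ℂ) - Hmat A B C z).det /
        ∏ k : Fin n, (B k).det :=
  stmt_10_general hn A B C hB E z hz
end

section
/- As a corollary of duality: z is an eigenvalue of T(E) if and only if E is an eigenvalue of H(z), for z ≠ 0. -/
open Matrix

/-!
Both spectral problems are the same Bloch problem for the block three-term recurrence
`B_k φ_{k+2} + A_k φ_{k+1} + C_k φ_k = E φ_{k+1}`. As `B_k` is invertible, `t_k` sends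
`(φ_{k+1}, φ_k)` to `(φ_{k+2}, φ_{k+1})` exactly when the recurrence holds at `k`, so `T(E) v = z v`
says that the solution with initial data `v` satisfies `φ_n = z φ_0` and `φ_{n+1} = z φ_1`. For such
a solution the corner blocks `C_1/z` and `z B_n` of `H(z)` supply the missing neighbours
`φ_0 = φ_n / z` and `φ_{n+1} = z φ_1`, so `ψ_k = φ_{k+1}` solves `H(z) ψ = E ψ`; conversely every `ψ`
extends in this way. Finally a Bloch solution vanishes on the sites iff its initial data vanish.
-/

theorem Matrix.mem_spectrum_iff_exists_mulVec_eq_smul {K N : Type*} [Field K] [Fintype N]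
    [DecidableEq N] (M : Matrix N N K) (μ : K) :
    μ ∈ spectrum K M ↔ ∃ v, v ≠ 0 ∧ M *ᵥ v = μ • v := by
  rw [← Matrix.spectrum_toLin', ← Module.End.hasEigenvalue_iff_mem_spectrum]
  simp only [Module.End.hasEigenvalue_iff, Module.End.mem_eigenspace_iff, Submodule.ne_bot_iff,
    Matrix.toLin'_apply, and_comm]

theorem Sum.smul_elim {α β M R : Type*} [SMul R M] (c : R) (f : α → M) (g : β → M) :
    c • Sum.elim f g = Sum.elim (c • f) (c • g) := by
  ext (a | b) <;> rfl

theorem Fin.sum_ite_val_eq {V : Type*} [AddCommMonoid V] {n : ℕ} (c : ℕ) (g : Fin n → V) :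
    ∑ b : Fin n, (if (b : ℕ) = c then g b else 0) = if h : c < n then g ⟨c, h⟩ else 0 := by
  split_ifs with h
  · rw [Fintype.sum_eq_single ⟨c, h⟩ fun b hb => if_neg fun hbc => hb (Fin.ext hbc), if_pos rfl]
  · exact Finset.sum_eq_zero fun b _ => if_neg fun hbc : (b : ℕ) = c => h (hbc ▸ b.isLt)

theorem Matrix.ite_mulVec {ι κ R : Type*} [Fintype κ] [NonUnitalNonAssocSemiring R] (p : Prop)
    [Decidable p] (M : Matrix ι κ R) (v : κ → R) :
    (if p then M else 0) *ᵥ v = if p then M *ᵥ v else 0 := by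
  split_ifs <;> simp

section Transfer

variable {m n : ℕ}

theorem oneStep_mulVec (A B C : Matrix (Fin m) (Fin m) ℂ) (E : ℂ) (x y : Fin m → ℂ) :
    oneStep A B C E *ᵥ Sum.elim x y = Sum.elim (B⁻¹ *ᵥ (E • x - A *ᵥ x - C *ᵥ y)) x := by
  rw [oneStep, fromBlocks_mulVec, Sum.elim_comp_inl, Sum.elim_comp_inr, one_mulVec, zero_mulVec,
    add_zero, ← mulVec_mulVec, neg_mulVec, ← mulVec_mulVec, ← mulVec_neg, ← mulVec_add,
    sub_mulVec, smul_mulVec, one_mulVec, sub_eq_add_neg (E • x - A *ᵥ x)]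

theorem oneStep_mulVec_eq_iff {A B C : Matrix (Fin m) (Fin m) ℂ} (hB : IsUnit B.det) (E : ℂ)
    (w x y : Fin m → ℂ) :
    oneStep A B C E *ᵥ Sum.elim x y = Sum.elim w x ↔ B *ᵥ w + A *ᵥ x + C *ᵥ y = E • x := by
  have hBw : B⁻¹ *ᵥ (B *ᵥ w) = w := by rw [mulVec_mulVec, nonsing_inv_mul _ hB, one_mulVec]
  rw [oneStep_mulVec, Sum.elim_eq_iff, and_iff_left rfl]
  constructor
  · intro h
    rw [← h, mulVec_mulVec, mul_nonsing_inv _ hB, one_mulVec]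
    abel
  · intro h
    convert hBw using 2
    rw [← h]
    abel

variable (A B C : Fin n → Matrix (Fin m) (Fin m) ℂ) (E : ℂ)

noncomputable def partialTransferMat (k : ℕ) : Matrix (Fin m ⊕ Fin m) (Fin m ⊕ Fin m) ℂ :=
  ((List.ofFn fun j : Fin n => oneStep (A j) (B j) (C j) E).take k).reverse.prod

theorem partialTransferMat_zero : partialTransferMat A B C E 0 = 1 := by
  simp [partialTransferMat]

theorem partialTransferMat_succ {k : ℕ} (hk : k < n) :
    partialTransferMat A B C E (k + 1) =
      oneStep (A ⟨k, hk⟩) (B ⟨k, hk⟩) (C ⟨k, hk⟩) E * partialTransferMat A B C E k := by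
  simp [partialTransferMat, List.take_add_one, hk]

theorem partialTransferMat_self : partialTransferMat A B C E n = transferMat A B C E := by
  rw [partialTransferMat, transferMat, List.take_of_length_le (by simp)]

/-- The vector `φ_{k+1}` is the value at site `k` (`k = 0, …, n - 1`); `φ_0` and `φ_{n+1}` are
the values just outside the chain. -/
def SolvesRecurrence (φ : ℕ → Fin m → ℂ) : Prop :=
  ∀ k (hk : k < n),
    B ⟨k, hk⟩ *ᵥ φ (k + 2) + A ⟨k, hk⟩ *ᵥ φ (k + 1) + C ⟨k, hk⟩ *ᵥ φ k = E • φ (k + 1)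

theorem solvesRecurrence_iff (hB : ∀ k, IsUnit (B k).det) (φ : ℕ → Fin m → ℂ) :
    SolvesRecurrence A B C E φ ↔ ∀ k ≤ n,
      partialTransferMat A B C E k *ᵥ Sum.elim (φ 1) (φ 0) = Sum.elim (φ (k + 1)) (φ k) := by
  constructor
  · intro hφ k hk
    induction k with
    | zero => rw [partialTransferMat_zero, one_mulVec]
    | succ k ih =>
      rw [partialTransferMat_succ A B C E hk, ← mulVec_mulVec, ih (by omega),
        (oneStep_mulVec_eq_iff (hB _) E _ _ _).2 (hφ k hk)]
  · intro h k hk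
    rw [← oneStep_mulVec_eq_iff (hB _), ← h k hk.le, mulVec_mulVec,
      ← partialTransferMat_succ A B C E hk, h (k + 1) hk]

noncomputable def transferOrbit (v : Fin m ⊕ Fin m → ℂ) : ℕ → Fin m → ℂ
  | 0 => v ∘ Sum.inr
  | k + 1 => (partialTransferMat A B C E k *ᵥ v) ∘ Sum.inl

theorem partialTransferMat_mulVec (v : Fin m ⊕ Fin m → ℂ) (k : ℕ) (hk : k ≤ n) :
    partialTransferMat A B C E k *ᵥ v =
      Sum.elim (transferOrbit A B C E v (k + 1)) (transferOrbit A B C E v k) := by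
  rw [← Sum.elim_comp_inl_inr (partialTransferMat A B C E k *ᵥ v)]
  congr 1
  cases k with
  | zero => rw [partialTransferMat_zero, one_mulVec]; rfl
  | succ k =>
    rw [partialTransferMat_succ A B C E hk, ← mulVec_mulVec,
      ← Sum.elim_comp_inl_inr (partialTransferMat A B C E k *ᵥ v), oneStep_mulVec]
    rfl

theorem mem_spectrum_transferMat_iff (hB : ∀ k, IsUnit (B k).det) (z : ℂ) :
    z ∈ spectrum ℂ (transferMat A B C E) ↔ ∃ φ : ℕ → Fin m → ℂ,
      Sum.elim (φ 1) (φ 0) ≠ 0 ∧ SolvesRecurrence A B C E φ ∧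
        φ n = z • φ 0 ∧ φ (n + 1) = z • φ 1 := by
  rw [mem_spectrum_iff_exists_mulVec_eq_smul, ← partialTransferMat_self]
  constructor
  · rintro ⟨v, hv, hTv⟩
    have horbit := partialTransferMat_mulVec A B C E v
    set φ := transferOrbit A B C E v
    have hinit : Sum.elim (φ 1) (φ 0) = v := by
      rw [← horbit 0 (Nat.zero_le n), partialTransferMat_zero, one_mulVec]
    have hφ : SolvesRecurrence A B C E φ :=
      (solvesRecurrence_iff A B C E hB φ).2 fun k hk => by rw [hinit, horbit k hk]
    rw [horbit n le_rfl, ← hinit, Sum.smul_elim, Sum.elim_eq_iff] at hTv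
    exact ⟨φ, hinit ▸ hv, hφ, hTv.2, hTv.1⟩
  · rintro ⟨φ, hv, hφ, h0, h1⟩
    refine ⟨_, hv, ?_⟩
    rw [(solvesRecurrence_iff A B C E hB φ).1 hφ n le_rfl, Sum.smul_elim, h0, h1]

end Transfer

section Hamiltonian

variable {m n : ℕ}

theorem mulVec_apply_eq_sum_blockOf (M : Matrix (Fin n × Fin m) (Fin n × Fin m) ℂ)
    (ψ : Fin n × Fin m → ℂ) (a : Fin n) :
    (fun i => (M *ᵥ ψ) (a, i)) = ∑ b, blockOf M a b *ᵥ fun j => ψ (b, j) := by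
  ext i
  simp only [mulVec, dotProduct, Fintype.sum_prod_type, Finset.sum_apply, blockOf]

def toSites (n : ℕ) (φ : ℕ → Fin m → ℂ) : Fin n × Fin m → ℂ := fun p => φ (p.1 + 1) p.2

variable (A B C : Fin n → Matrix (Fin m) (Fin m) ℂ)

theorem blockOf_Hmat (z : ℂ) (a b : Fin n) :
    blockOf (Hmat A B C z) a b =
      (if a = b then A a else 0)
      + (if (b : ℕ) = (a : ℕ) + 1 then B a else 0)
      + (if (a : ℕ) = (b : ℕ) + 1 then C a else 0)
      + (if (a : ℕ) = 0 ∧ (b : ℕ) = n - 1 then z⁻¹ • C a else 0)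
      + (if (a : ℕ) = n - 1 ∧ (b : ℕ) = 0 then z • B a else 0) :=
  rfl

theorem Hmat_mulVec_toSites {z : ℂ} (hz : z ≠ 0) {φ : ℕ → Fin m → ℂ} (h0 : φ n = z • φ 0)
    (h1 : φ (n + 1) = z • φ 1) (a : Fin n) :
    (fun i => (Hmat A B C z *ᵥ toSites n φ) (a, i)) =
      B a *ᵥ φ (a + 2) + A a *ᵥ φ (a + 1) + C a *ᵥ φ a := by
  have ha := a.isLt
  have hright : ((if (a : ℕ) + 1 < n then B a *ᵥ φ (a + 1 + 1) else 0) +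
      if (a : ℕ) = n - 1 then (z • B a) *ᵥ φ (0 + 1) else 0) = B a *ᵥ φ (a + 2) := by
    split_ifs with hlt hlast <;> try omega
    · rw [add_zero]
    · rw [zero_add, smul_mulVec, ← mulVec_smul, ← h1, show (a : ℕ) + 2 = n + 1 by omega]
  have hleft : ((if 0 < (a : ℕ) then C a *ᵥ φ (a - 1 + 1) else 0) +
      if (a : ℕ) = 0 then (z⁻¹ • C a) *ᵥ φ (n - 1 + 1) else 0) = C a *ᵥ φ a := by
    split_ifs with hpos <;> try omega
    · rw [add_zero, Nat.sub_add_cancel hpos]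
    · rw [zero_add, Nat.sub_add_cancel (by omega), h0, smul_mulVec, mulVec_smul, smul_smul,
        inv_mul_cancel₀ hz, one_smul]
      congr 2
      omega
  have hpred : ∀ b : Fin n, (a : ℕ) = b + 1 ↔ (b : ℕ) = a - 1 ∧ 0 < (a : ℕ) := by omega
  rw [mulVec_apply_eq_sum_blockOf]
  change ∑ b, blockOf (Hmat A B C z) a b *ᵥ φ (b + 1) = _
  simp only [blockOf_Hmat, add_mulVec, ite_mulVec, Finset.sum_add_distrib, hpred,
    and_comm (a := (a : ℕ) = 0), and_comm (a := (a : ℕ) = n - 1), ite_and, Fin.sum_ite_val_eq,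
    Finset.sum_ite_eq, Finset.mem_univ, if_true, dif_pos (by omega : (a : ℕ) - 1 < n),
    dif_pos (by omega : n - 1 < n), dif_pos (by omega : 0 < n), dite_eq_ite]
  conv_rhs => rw [← hright, ← hleft]
  abel

theorem Hmat_mulVec_toSites_eq_smul_iff {z : ℂ} (hz : z ≠ 0) {φ : ℕ → Fin m → ℂ}
    (h0 : φ n = z • φ 0) (h1 : φ (n + 1) = z • φ 1) (E : ℂ) :
    Hmat A B C z *ᵥ toSites n φ = E • toSites n φ ↔ SolvesRecurrence A B C E φ := by
  constructor
  · intro h k hk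
    rw [← Hmat_mulVec_toSites A B C hz h0 h1 ⟨k, hk⟩, h]
    rfl
  · intro h
    ext ⟨a, i⟩
    exact (congrFun (Hmat_mulVec_toSites A B C hz h0 h1 a) i).trans (congrFun (h a a.isLt) i)

theorem exists_toSites_eq (hn : 0 < n) {z : ℂ} (hz : z ≠ 0) (ψ : Fin n × Fin m → ℂ) :
    ∃ φ : ℕ → Fin m → ℂ, φ n = z • φ 0 ∧ φ (n + 1) = z • φ 1 ∧ toSites n φ = ψ := by
  refine ⟨fun k j => if k = 0 then z⁻¹ * ψ (⟨n - 1, by omega⟩, j)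
    else if h : k ≤ n then ψ (⟨k - 1, by omega⟩, j) else z * ψ (⟨0, hn⟩, j), ?_, ?_, ?_⟩
  · ext j
    simp [hn.ne', mul_inv_cancel_left₀ hz]
  · ext j
    simp [hn.ne']
  · ext ⟨a, j⟩
    simp [toSites, Nat.succ_le_of_lt a.isLt]

theorem mem_spectrum_Hmat_iff (hn : 0 < n) {z : ℂ} (hz : z ≠ 0) (E : ℂ) :
    E ∈ spectrum ℂ (Hmat A B C z) ↔ ∃ φ : ℕ → Fin m → ℂ,
      toSites n φ ≠ 0 ∧ SolvesRecurrence A B C E φ ∧ φ n = z • φ 0 ∧ φ (n + 1) = z • φ 1 := by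
  rw [mem_spectrum_iff_exists_mulVec_eq_smul]
  constructor
  · rintro ⟨ψ, hψ, hHψ⟩
    obtain ⟨φ, h0, h1, rfl⟩ := exists_toSites_eq hn hz ψ
    exact ⟨φ, hψ, (Hmat_mulVec_toSites_eq_smul_iff A B C hz h0 h1 E).1 hHψ, h0, h1⟩
  · rintro ⟨φ, hψ, hφ, h0, h1⟩
    exact ⟨_, hψ, (Hmat_mulVec_toSites_eq_smul_iff A B C hz h0 h1 E).2 hφ⟩

end Hamiltonian

theorem toSites_eq_zero_iff {m n : ℕ} (hn : 0 < n) (A B C : Fin n → Matrix (Fin m) (Fin m) ℂ)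
    (hB : ∀ k, IsUnit (B k).det) {E z : ℂ} (hz : z ≠ 0) {φ : ℕ → Fin m → ℂ}
    (hφ : SolvesRecurrence A B C E φ) (h0 : φ n = z • φ 0) :
    toSites n φ = 0 ↔ Sum.elim (φ 1) (φ 0) = 0 := by
  constructor
  · intro h
    have hsite : ∀ k (hk : k < n), φ (k + 1) = 0 := fun k hk =>
      funext fun j => congrFun h (⟨k, hk⟩, j)
    have hφn : φ n = 0 := by simpa [Nat.sub_add_cancel hn] using hsite (n - 1) (by omega)
    have hφ0 : φ 0 = 0 := (smul_eq_zero.1 (h0.symm.trans hφn)).resolve_left hz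
    rw [hsite 0 hn, hφ0, Sum.elim_zero_zero]
  · intro h
    ext ⟨a, i⟩
    have hP := (solvesRecurrence_iff A B C E hB φ).1 hφ a a.isLt.le
    rw [h, mulVec_zero] at hP
    exact (congrFun hP (Sum.inl i)).symm

theorem stmt_11_general {m n : ℕ} (hn : 2 ≤ n) (A B C : Fin n → Matrix (Fin m) (Fin m) ℂ)
    (hB : ∀ k, IsUnit (B k).det)
    (E : ℂ) (z : ℂ) (hz : z ≠ 0) :
    z ∈ spectrum ℂ (transferMat A B C E) ↔ E ∈ spectrum ℂ (Hmat A B C z) := by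
  rw [mem_spectrum_transferMat_iff A B C E hB, mem_spectrum_Hmat_iff A B C (by omega) hz]
  exact exists_congr fun φ => and_congr_left fun ⟨hφ, h0, _⟩ =>
    not_congr (toSites_eq_zero_iff (by omega) A B C hB hz hφ h0).symm

/-- Corollary of duality: for `z ≠ 0`, `z` is an eigenvalue of `T(E)` iff `E` is an
eigenvalue of `H(z)`. -/
theorem stmt_11 {m n : ℕ} (hn : 2 ≤ n) (A B C : Fin n → Matrix (Fin m) (Fin m) ℂ)
    (hB : ∀ k, IsUnit (B k).det) (hC : ∀ k, IsUnit (C k).det)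
    (E : ℂ) (z : ℂ) (hz : z ≠ 0) :
    z ∈ spectrum ℂ (transferMat A B C E) ↔ E ∈ spectrum ℂ (Hmat A B C z) :=
  stmt_11_general hn A B C hB E z hz
end

section
/- (Corner-block resolvent reduction.) Let h be H(zⁿ) with its two corner blocks removed (so h is z-independent block tridiagonal), g = (h − E)⁻¹ with m×m blocks g_{ab}, and G^B = (H^B(z) − E)⁻¹. Assuming all indicated inverses exist, trace( z B_n G^B_{1n} − z⁻¹ C_1 G^B_{n1} ) = trace of the inverse of the 2m×2m block matrix [[−zⁿ B_n g_{1n} − I_m, −zⁿ B_n g_{11}], [z⁻ⁿ C_1 g_{nn}, z⁻ⁿ C_1 g_{n1} + I_m]]. -/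
open Matrix

/-- The matrix `h`: `H(z)` with its two corner blocks removed, i.e. the `z`-independent
block tridiagonal matrix with diagonal blocks `A_k`, superdiagonal `B_k`,
subdiagonal `C_k`. -/
noncomputable def hmat {n m : ℕ} (A B C : Fin n → Matrix (Fin m) (Fin m) ℂ) :
    Matrix (Fin n × Fin m) (Fin n × Fin m) ℂ := fun p q =>
  ((if p.1 = q.1 then A p.1 else 0)
    + (if (q.1 : ℕ) = (p.1 : ℕ) + 1 then B p.1 else 0)
    + (if (p.1 : ℕ) = (q.1 : ℕ) + 1 then C p.1 else 0)) p.2 q.2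

/-!
Conjugating by `S(z)` turns `H^B(z)` into `H(zⁿ)`, so with `G = (H(zⁿ) − E)⁻¹`,
`Y = zⁿ B_n` and `X = z⁻ⁿ C_1` the left-hand side is `tr(Y G_{1n}) − tr(X G_{n1})`.
Now `H(zⁿ) − E = (h − E) + P Q` is a rank-`2m` perturbation, with `P = [e_n  e_1]` and
`Q = [Y e_1ᵀ ; X e_nᵀ]` built from the block inclusions `e_k`, and the push-through identity
gives `(1 + Q g P)⁻¹ = 1 − Q G P`. The `2m × 2m` matrix of the statement is
`diag(−1, 1) (1 + Q g P)`, so the trace of its inverse is `tr((1 − Q G P) diag(−1, 1))`,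
which is again `tr(Y G_{1n}) − tr(X G_{n1})`.
-/

namespace Matrix

variable {R β κ ι ι' : Type*} [CommRing R]

section Resolvent

variable [Fintype ι] [DecidableEq ι] [Fintype ι'] [DecidableEq ι']

theorem inv_one_add_mul_inv_mul_eq_one_sub {h H : Matrix ι ι R} {P : Matrix ι ι' R}
    {Q : Matrix ι' ι R} (hH : H = h + P * Q) (hh : IsUnit h.det) (hHu : IsUnit H.det) :
    (1 + Q * h⁻¹ * P)⁻¹ = 1 - Q * H⁻¹ * P := by
  apply inv_eq_right_inv
  have hcross : Q * h⁻¹ * P * (Q * H⁻¹ * P) = Q * h⁻¹ * P - Q * H⁻¹ * P := calc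
    Q * h⁻¹ * P * (Q * H⁻¹ * P) = Q * (h⁻¹ * (H - h) * H⁻¹) * P := by
      rw [hH, add_sub_cancel_left]; simp only [Matrix.mul_assoc]
    _ = Q * h⁻¹ * P - Q * H⁻¹ * P := by
      rw [Matrix.mul_sub, Matrix.sub_mul, Matrix.mul_assoc h⁻¹ H, mul_nonsing_inv _ hHu,
        nonsing_inv_mul _ hh, Matrix.mul_one, Matrix.one_mul, Matrix.mul_sub, Matrix.sub_mul,
        Matrix.mul_assoc]
  rw [Matrix.mul_sub, Matrix.mul_one, Matrix.add_mul (1 : Matrix ι' ι' R), Matrix.one_mul, hcross]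
  abel

theorem det_eq_of_mul_eq_mul {S M M' : Matrix ι ι R} (hS : IsUnit S.det) (h : S * M' = M * S) :
    M.det = M'.det := by
  have := congrArg det h
  rw [det_mul, det_mul, mul_comm M.det] at this
  exact (hS.mul_left_cancel this).symm

theorem mul_inv_eq_inv_mul_of_mul_eq_mul {S M M' : Matrix ι ι R} (hM : IsUnit M.det)
    (hM' : IsUnit M'.det) (h : S * M' = M * S) : S * M'⁻¹ = M⁻¹ * S := calc
  S * M'⁻¹ = M⁻¹ * (M * S) * M'⁻¹ := by
    rw [← Matrix.mul_assoc, nonsing_inv_mul _ hM, Matrix.one_mul]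
  _ = M⁻¹ * S := by
    rw [← h, Matrix.mul_assoc, Matrix.mul_assoc, mul_nonsing_inv _ hM', Matrix.mul_one]

end Resolvent

theorem trace_fromBlocks [Fintype ι] [Fintype ι'] (A : Matrix ι ι R) (B : Matrix ι ι' R)
    (C : Matrix ι' ι R) (D : Matrix ι' ι' R) :
    trace (fromBlocks A B C D) = trace A + trace D := by
  simp [trace, Fintype.sum_sum_type]

section BlockInclusion

variable [DecidableEq β] [Fintype κ] [DecidableEq κ]

variable (R κ) in
def blockIncl (a : β) : Matrix (β × κ) κ R :=
  (1 : Matrix (β × κ) (β × κ) R).submatrix id (Prod.mk a)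

theorem blockIncl_transpose_mul_mul [Fintype β] (M : Matrix (β × κ) (β × κ) R) (a b : β) :
    (blockIncl R κ a)ᵀ * M * blockIncl R κ b = M.submatrix (Prod.mk a) (Prod.mk b) := by
  rw [blockIncl, blockIncl, transpose_submatrix, transpose_one]
  exact congrArg (· * _) (one_submatrix_mul (Prod.mk a) (Equiv.refl _) M) |>.trans
    (mul_submatrix_one (Equiv.refl _) (Prod.mk b) _)

theorem blockIncl_mul_mul_transpose_apply (a b : β) (Z : Matrix κ κ R) (p q : β × κ) :
    (blockIncl R κ a * Z * (blockIncl R κ b)ᵀ) p q =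
      if p.1 = a ∧ q.1 = b then Z p.2 q.2 else 0 := by
  obtain ⟨a', i⟩ := p
  obtain ⟨b', j⟩ := q
  simp only [blockIncl, transpose_submatrix, transpose_one, mul_apply, submatrix_apply, one_apply,
    id_eq, eq_comm, Prod.ext_iff, ite_and, ite_mul, one_mul, zero_mul, Finset.sum_ite_irrel,
    Finset.sum_ite_eq, Finset.mem_univ, ↓reduceIte, Finset.sum_const_zero, mul_ite, mul_one,
    mul_zero]
  split_ifs <;> rfl

theorem trace_inv_fromBlocks_of_eq_add_corners [Fintype β] {h H : Matrix (β × κ) (β × κ) R}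
    {a b : β} {X Y : Matrix κ κ R}
    (hH : H = h + (blockIncl R κ b * Y * (blockIncl R κ a)ᵀ +
      blockIncl R κ a * X * (blockIncl R κ b)ᵀ))
    (hh : IsUnit h.det) (hHu : IsUnit H.det) :
    trace (fromBlocks (-(Y * h⁻¹.submatrix (Prod.mk a) (Prod.mk b)) - 1)
        (-(Y * h⁻¹.submatrix (Prod.mk a) (Prod.mk a)))
        (X * h⁻¹.submatrix (Prod.mk b) (Prod.mk b))
        (X * h⁻¹.submatrix (Prod.mk b) (Prod.mk a) + 1))⁻¹ =
      trace (Y * H⁻¹.submatrix (Prod.mk a) (Prod.mk b)) -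
        trace (X * H⁻¹.submatrix (Prod.mk b) (Prod.mk a)) := by
  set P := fromCols (blockIncl R κ b) (blockIncl R κ a)
  set Q := fromRows (Y * (blockIncl R κ a)ᵀ) (X * (blockIncl R κ b)ᵀ)
  have hQMP (M : Matrix (β × κ) (β × κ) R) : Q * M * P =
      fromBlocks (Y * M.submatrix (Prod.mk a) (Prod.mk b)) (Y * M.submatrix (Prod.mk a) (Prod.mk a))
        (X * M.submatrix (Prod.mk b) (Prod.mk b)) (X * M.submatrix (Prod.mk b) (Prod.mk a)) := by
    rw [fromRows_mul, fromRows_mul_fromCols]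
    simp only [Matrix.mul_assoc X, Matrix.mul_assoc Y, blockIncl_transpose_mul_mul]
  set σ : Matrix (κ ⊕ κ) (κ ⊕ κ) R := fromBlocks (-1) 0 0 1
  have hσ : σ⁻¹ = σ := inv_eq_left_inv (by simp [σ, fromBlocks_multiply, fromBlocks_one])
  have hfactor : fromBlocks (-(Y * h⁻¹.submatrix (Prod.mk a) (Prod.mk b)) - 1)
        (-(Y * h⁻¹.submatrix (Prod.mk a) (Prod.mk a)))
        (X * h⁻¹.submatrix (Prod.mk b) (Prod.mk b))
        (X * h⁻¹.submatrix (Prod.mk b) (Prod.mk a) + 1) = σ * (1 + Q * h⁻¹ * P) := by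
    rw [hQMP, ← fromBlocks_one, fromBlocks_add, fromBlocks_multiply]
    simp only [Matrix.neg_mul, Matrix.one_mul, Matrix.zero_mul, add_zero, zero_add]
    congr 1 <;> abel
  have hpush : (1 + Q * h⁻¹ * P)⁻¹ = 1 - Q * H⁻¹ * P := inv_one_add_mul_inv_mul_eq_one_sub
    (by simp only [hH, P, Q, fromCols_mul_fromRows, Matrix.mul_assoc]) hh hHu
  rw [hfactor, mul_inv_rev, hσ, hpush, hQMP, ← fromBlocks_one, sub_eq_add_neg, fromBlocks_neg,
    fromBlocks_add, fromBlocks_multiply, trace_fromBlocks]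
  simp [sub_eq_add_neg]

end BlockInclusion

end Matrix

section Balancing

variable {n m : ℕ}

theorem blockOf_eq_submatrix (M : Matrix (Fin n × Fin m) (Fin n × Fin m) ℂ) (a b : Fin n) :
    blockOf M a b = M.submatrix (Prod.mk a) (Prod.mk b) := rfl

theorem Hmat_sub_hmat (A B C : Fin n → Matrix (Fin m) (Fin m) ℂ) (w : ℂ) {a b : Fin n}
    (ha : (a : ℕ) = 0) (hb : (b : ℕ) = n - 1) :
    Hmat A B C w - hmat A B C =
      blockIncl ℂ (Fin m) b * (w • B b) * (blockIncl ℂ (Fin m) a)ᵀ +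
        blockIncl ℂ (Fin m) a * (w⁻¹ • C a) * (blockIncl ℂ (Fin m) b)ᵀ := by
  ext ⟨a', i⟩ ⟨b', j⟩
  simp only [Matrix.sub_apply, Matrix.add_apply, blockIncl_mul_mul_transpose_apply, Hmat, hmat,
    ← ha, ← hb, ← Fin.ext_iff]
  rw [show ∀ x y z : ℂ, x + y + z - x = z + y from fun _ _ _ => by ring]
  congr 1 <;> split_ifs with h
  exacts [by rw [h.1], rfl, by rw [h.1], rfl]

theorem Smat_mul_HBmat (A B C : Fin n → Matrix (Fin m) (Fin m) ℂ) {z : ℂ} (hz : z ≠ 0) :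
    Smat n m z * HBmat A B C z = Hmat A B C (z ^ n) * Smat n m z := by
  ext ⟨a, i⟩ ⟨b, j⟩
  simp only [Smat, diagonal_mul, mul_diagonal, HBmat, Hmat, Matrix.add_apply, mul_add, add_mul]
  have hn : n - 1 + 1 = n := by have := a.isLt; omega
  iterate 4 congr 1
  · split_ifs with h
    · rw [h]; ring
    · simp
  all_goals split_ifs with h
  all_goals simp only [Matrix.smul_apply, smul_eq_mul, Matrix.zero_apply, mul_zero, zero_mul]
  · rw [h]; ring
  · rw [h]; field_simp; ring
  · rw [h.1, h.2, hn]; field_simp; ring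
  · rw [h.1, h.2, hn]; ring

theorem isUnit_det_Smat {z : ℂ} (hz : z ≠ 0) : IsUnit (Smat n m z).det := by
  simp [Smat, det_diagonal, Finset.prod_ne_zero_iff, hz]

theorem blockOf_eq_of_Smat_mul_eq {z : ℂ} (hz : z ≠ 0)
    {M M' : Matrix (Fin n × Fin m) (Fin n × Fin m) ℂ} (h : Smat n m z * M' = M * Smat n m z)
    (a b : Fin n) :
    blockOf M' a b = (z ^ ((b : ℕ) + 1) / z ^ ((a : ℕ) + 1)) • blockOf M a b := by
  ext i j
  have := congrFun (congrFun h (a, i)) (b, j)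
  simp only [Smat, diagonal_mul, mul_diagonal] at this
  simp only [blockOf, Matrix.smul_apply, smul_eq_mul]
  field_simp
  linear_combination this

end Balancing

/-- Corner-block resolvent reduction: with `g = (h − E)⁻¹` and
`G^B = (H^B(z) − E)⁻¹`,
`tr(z B_n G^B_{1n} − z⁻¹ C_1 G^B_{n1})` equals the trace of the inverse of the
`2m × 2m` block matrix
`[[−zⁿ B_n g_{1n} − I, −zⁿ B_n g_{11}], [z⁻ⁿ C_1 g_{nn}, z⁻ⁿ C_1 g_{n1} + I]]`. -/
theorem stmt_19 {n m : ℕ} (hn : 2 ≤ n) (A B C : Fin n → Matrix (Fin m) (Fin m) ℂ)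
    (E z : ℂ) (hz : z ≠ 0)
    (hg : IsUnit (hmat A B C - E • 1).det)
    (hGB : IsUnit (HBmat A B C z - E • 1).det) :
    Matrix.trace
        (z • (B (⟨n - 1, by omega⟩ : Fin n) *
            blockOf (HBmat A B C z - E • 1)⁻¹ (⟨0, by omega⟩ : Fin n)
              (⟨n - 1, by omega⟩ : Fin n)) -
          z⁻¹ • (C (⟨0, by omega⟩ : Fin n) *
            blockOf (HBmat A B C z - E • 1)⁻¹ (⟨n - 1, by omega⟩ : Fin n)
              (⟨0, by omega⟩ : Fin n))) =
      Matrix.trace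
        (fromBlocks
          (-(z ^ n) • (B (⟨n - 1, by omega⟩ : Fin n) *
              blockOf (hmat A B C - E • 1)⁻¹ (⟨0, by omega⟩ : Fin n)
                (⟨n - 1, by omega⟩ : Fin n)) - 1)
          (-(z ^ n) • (B (⟨n - 1, by omega⟩ : Fin n) *
              blockOf (hmat A B C - E • 1)⁻¹ (⟨0, by omega⟩ : Fin n)
                (⟨0, by omega⟩ : Fin n)))
          ((z ^ n)⁻¹ • (C (⟨0, by omega⟩ : Fin n) *
              blockOf (hmat A B C - E • 1)⁻¹ (⟨n - 1, by omega⟩ : Fin n)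
                (⟨n - 1, by omega⟩ : Fin n)))
          ((z ^ n)⁻¹ • (C (⟨0, by omega⟩ : Fin n) *
              blockOf (hmat A B C - E • 1)⁻¹ (⟨n - 1, by omega⟩ : Fin n)
                (⟨0, by omega⟩ : Fin n)) + 1))⁻¹ := by
  set i0 : Fin n := ⟨0, by omega⟩
  set iN : Fin n := ⟨n - 1, by omega⟩
  set H := Hmat A B C (z ^ n) - E • 1
  have hconj : Smat n m z * (HBmat A B C z - E • 1) = H * Smat n m z := by
    rw [Matrix.mul_sub, Matrix.sub_mul, Smat_mul_HBmat A B C hz, Matrix.mul_smul, Matrix.smul_mul,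
      Matrix.mul_one, Matrix.one_mul]
  have hH : IsUnit H.det := det_eq_of_mul_eq_mul (isUnit_det_Smat hz) hconj ▸ hGB
  have hblocks := blockOf_eq_of_Smat_mul_eq hz (mul_inv_eq_inv_mul_of_mul_eq_mul hH hGB hconj)
  have hperturb : H = (hmat A B C - E • 1) + (blockIncl ℂ (Fin m) iN * (z ^ n • B iN) *
      (blockIncl ℂ (Fin m) i0)ᵀ + blockIncl ℂ (Fin m) i0 * ((z ^ n)⁻¹ • C i0) *
      (blockIncl ℂ (Fin m) iN)ᵀ) := by
    rw [← Hmat_sub_hmat A B C (z ^ n) (a := i0) (b := iN) rfl rfl]; simp only [H]; abel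
  have hn' : n - 1 + 1 = n := by omega
  have hscale₁ : z * (z ^ ((iN : ℕ) + 1) / z ^ ((i0 : ℕ) + 1)) = z ^ n := by
    simp only [iN, i0, zero_add, pow_one, hn']; field_simp
  have hscale₂ : z⁻¹ * (z ^ ((i0 : ℕ) + 1) / z ^ ((iN : ℕ) + 1)) = (z ^ n)⁻¹ := by
    simp only [iN, i0, zero_add, pow_one, hn']; field_simp
  rw [hblocks, hblocks, Matrix.mul_smul, Matrix.mul_smul, smul_smul, smul_smul, hscale₁,
    hscale₂, ← Matrix.smul_mul, ← Matrix.smul_mul, trace_sub]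
  simp only [neg_smul, ← Matrix.smul_mul, blockOf_eq_submatrix]
  exact (trace_inv_fromBlocks_of_eq_add_corners hperturb hg hH).symm
end
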